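/- arXiv:2204.08635 — 2 statements merged into one kernel-verified Lean document; each statement's English description precedes it below -/
import Mathlib

section
/- Let n ≥ 1, α ∈ (0,∞), t ∈ (0,∞), p ∈ (0,∞), r ∈ (1,∞) and q ∈ [1,∞]. Then there is a constant C ≥ 1, independent of f, such that for every measurable function f : ℝⁿ → ℂ, C^{-1}(‖f‖_{(K̇E^{α,p}_{q,r})_t} + ‖f‖_{(E_r^q)_t}) ≤ ‖f‖_{(KE^{α,p}_{q,r})_t} ≤ C(‖f‖_{(K̇E^{α,p}_{q,r})_t} + ‖f‖_{(E_r^q)_t}). In particular (KE^{α,p}_{q,r})_t(ℝⁿ) = (K̇E^{α,p}_{q,r})_t(ℝⁿ) ∩ (E_r^q)_t(ℝⁿ). -/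
open MeasureTheory Metric Set ENNReal
open scoped NNReal

noncomputable section

abbrev En (n : ℕ) : Type := EuclideanSpace ℝ (Fin n)

/-- Slice norm `‖f‖_{(E_r^q)_t}` for `ℝ≥0∞`-valued functions. -/
def sliceNorm (n : ℕ) (t r : ℝ) (q : ℝ≥0∞) (g : En n → ℝ≥0∞) : ℝ≥0∞ :=
  if q = ∞ then
    essSup (fun x => ((volume (ball x t))⁻¹ * ∫⁻ y in ball x t, g y ^ r) ^ (1 / r)) volume
  else
    (∫⁻ x, (((volume (ball x t))⁻¹ * ∫⁻ y in ball x t, g y ^ r) ^ (1 / r)) ^ q.toReal) ^ (1 / q.toReal)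

/-- Slice norm of a complex-valued function. -/
def sliceNormC (n : ℕ) (t r : ℝ) (q : ℝ≥0∞) (f : En n → ℂ) : ℝ≥0∞ :=
  sliceNorm n t r q fun y => (‖f y‖₊ : ℝ≥0∞)

/-- The ball `B_k = {x : |x| ≤ 2^k}`. -/
def ballZ (n : ℕ) (k : ℤ) : Set (En n) := closedBall 0 ((2 : ℝ) ^ k)

/-- The shell `S_k = B_k \ B_{k-1}`. -/
def shell (n : ℕ) (k : ℤ) : Set (En n) := ballZ n k \ ballZ n (k - 1)

/-- Homogeneous Herz-slice norm of an `ℝ≥0∞`-valued function. -/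
def herzHom (n : ℕ) (t r : ℝ) (q : ℝ≥0∞) (α : ℝ) (p : ℝ≥0∞) (g : En n → ℝ≥0∞) : ℝ≥0∞ :=
  if p = ∞ then
    ⨆ k : ℤ, (2 : ℝ≥0∞) ^ ((k : ℝ) * α) * sliceNorm n t r q ((shell n k).indicator g)
  else
    (∑' k : ℤ, ((2 : ℝ≥0∞) ^ ((k : ℝ) * α) * sliceNorm n t r q ((shell n k).indicator g)) ^ p.toReal) ^ (1 / p.toReal)

/-- Homogeneous Herz-slice norm of a complex-valued function. -/
def herzHomC (n : ℕ) (t r : ℝ) (q : ℝ≥0∞) (α : ℝ) (p : ℝ≥0∞) (f : En n → ℂ) : ℝ≥0∞ :=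
  herzHom n t r q α p fun y => (‖f y‖₊ : ℝ≥0∞)

/-- The `k`-th piece in the non-homogeneous decomposition: `B_0` for `k = 0`, `S_k` for `k ≥ 1`. -/
def pieceN (n : ℕ) (k : ℕ) : Set (En n) := if k = 0 then ballZ n 0 else shell n k

/-- Non-homogeneous Herz-slice norm of an `ℝ≥0∞`-valued function. -/
def herzNonHom (n : ℕ) (t r : ℝ) (q : ℝ≥0∞) (α : ℝ) (p : ℝ≥0∞) (g : En n → ℝ≥0∞) : ℝ≥0∞ :=
  if p = ∞ then
    ⨆ k : ℕ, (2 : ℝ≥0∞) ^ ((k : ℝ) * α) * sliceNorm n t r q ((pieceN n k).indicator g)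
  else
    (∑' k : ℕ, ((2 : ℝ≥0∞) ^ ((k : ℝ) * α) * sliceNorm n t r q ((pieceN n k).indicator g)) ^ p.toReal) ^ (1 / p.toReal)

/-- Non-homogeneous Herz-slice norm of a complex-valued function. -/
def herzNonHomC (n : ℕ) (t r : ℝ) (q : ℝ≥0∞) (α : ℝ) (p : ℝ≥0∞) (f : En n → ℂ) : ℝ≥0∞ :=
  herzNonHom n t r q α p fun y => (‖f y‖₊ : ℝ≥0∞)

/-- Hardy–Littlewood maximal operator. -/
def maximal (n : ℕ) (f : En n → ℂ) (x : En n) : ℝ≥0∞ :=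
  ⨆ (ρ : ℝ) (_ : 0 < ρ), (volume (ball x ρ))⁻¹ * ∫⁻ y in ball x ρ, (‖f y‖₊ : ℝ≥0∞)

/-!
Write `N`, `H`, `S` for the non-homogeneous, homogeneous and slice norms of `|f|`, and `P = p`.
The non-homogeneous norm replaces the shells `S_k`, `k ≤ 0`, by the ball `B_0` containing them.
As the slice norm is monotone, `‖f 1_{B_0}‖ ≤ S`, whence `N^P ≤ S^P + H^P`; conversely the shell
`S_k`, `k ≤ 0`, contributes at most `2^{kαP} ‖f 1_{B_0}‖^P ≤ 2^{kαP} N^P` to `H^P`, a geometric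
series since `α > 0`. Finally the slice norm is countably subadditive (Minkowski's inequality in
`L^r` of each ball, then in `L^q`), so `S` is at most the sum over the pieces `B_0, S_1, S_2, …`,
that is at most `∑_{k ≥ 0} 2^{-kα} N`.
-/

namespace ENNReal

theorem rpow_iSup {ι : Sort*} {s : ℝ} (hs : 0 < s) (f : ι → ℝ≥0∞) :
    (⨆ i, f i) ^ s = ⨆ i, f i ^ s :=
  (orderIsoRpow s hs).map_iSup f

theorem le_rpow_inv_mul_of_rpow_le {a b c : ℝ≥0∞} {P : ℝ} (hP : 0 < P) (h : a ^ P ≤ c * b ^ P) :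
    a ≤ c ^ (1 / P) * b := by
  have hP' : 0 ≤ 1 / P := by positivity
  calc a = (a ^ P) ^ (1 / P) := by rw [← rpow_mul, mul_one_div_cancel hP.ne', rpow_one]
    _ ≤ (c * b ^ P) ^ (1 / P) := rpow_le_rpow h hP'
    _ = c ^ (1 / P) * b := by
      rw [mul_rpow_of_nonneg _ _ hP', ← rpow_mul, mul_one_div_cancel hP.ne', rpow_one]

end ENNReal

section CountableMinkowski

variable {X : Type*} [MeasurableSpace X] {μ : Measure X}

theorem eLpNorm_iSup_le_of_monotone {F : ℕ → X → ℝ≥0∞} (hF : ∀ N, AEMeasurable (F N) μ)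
    (hmono : Monotone F) (q : ℝ≥0∞) :
    eLpNorm (fun x => ⨆ N, F N x) q μ ≤ ⨆ N, eLpNorm (F N) q μ := by
  rcases eq_or_ne q 0 with rfl | hq0
  · simp
  rcases eq_or_ne q ∞ with rfl | hqtop
  · simp only [eLpNorm_exponent_top, eLpNormEssSup, enorm_eq_self]
    have hle : ∀ᵐ x ∂μ, ∀ N, F N x ≤ essSup (F N) μ := ae_all_iff.2 fun N => ae_le_essSup
    exact essSup_le_of_ae_le _ (hle.mono fun x hx => iSup_mono hx)
  have hQ : 0 < q.toReal := toReal_pos hq0 hqtop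
  simp only [eLpNorm_eq_lintegral_rpow_enorm_toReal hq0 hqtop, enorm_eq_self]
  rw [← ENNReal.rpow_iSup (by positivity), ← lintegral_iSup' (fun N => (hF N).pow_const _)
    (ae_of_all _ fun x _ _ h => rpow_le_rpow (hmono h x) hQ.le)]
  simp only [ENNReal.rpow_iSup hQ, le_rfl]

theorem eLpNorm_tsum_le {G : ℕ → X → ℝ≥0∞} (hG : ∀ k, AEMeasurable (G k) μ) {q : ℝ≥0∞}
    (hq : 1 ≤ q) : eLpNorm (fun x => ∑' k, G k x) q μ ≤ ∑' k, eLpNorm (G k) q μ := by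
  simp only [ENNReal.tsum_eq_iSup_nat]
  calc eLpNorm (fun x => ⨆ N, ∑ k ∈ Finset.range N, G k x) q μ
      ≤ ⨆ N, eLpNorm (fun x => ∑ k ∈ Finset.range N, G k x) q μ :=
        eLpNorm_iSup_le_of_monotone (fun N => Finset.aemeasurable_fun_sum _ fun k _ => hG k)
          (fun _ _ h x => Finset.sum_le_sum_of_subset (Finset.range_subset_range.2 h)) q
    _ ≤ ⨆ N, ∑ k ∈ Finset.range N, eLpNorm (G k) q μ := iSup_mono fun N => by
        rw [← Finset.sum_fn]
        exact eLpNorm_sum_le (fun k _ => (hG k).aestronglyMeasurable) hq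

end CountableMinkowski

theorem measurable_setLIntegral_ball {X : Type*} [PseudoMetricSpace X] [MeasurableSpace X]
    [OpensMeasurableSpace X] [SecondCountableTopology X] {μ : Measure X} [SFinite μ]
    {g : X → ℝ≥0∞} (hg : Measurable g) (t : ℝ) :
    Measurable fun x => ∫⁻ y in ball x t, g y ∂μ := by
  have hD : MeasurableSet {z : X × X | dist z.2 z.1 < t} :=
    measurableSet_lt (measurable_snd.dist measurable_fst) measurable_const
  have hind : Measurable fun z : X × X => (ball z.1 t).indicator g z.2 :=
    (hg.comp measurable_snd).indicator hD
  simpa only [lintegral_indicator measurableSet_ball] using hind.lintegral_prod_right'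

section SliceNorm

variable {n : ℕ} {t r : ℝ} {q : ℝ≥0∞}

def ballMean (n : ℕ) (t r : ℝ) (g : En n → ℝ≥0∞) (x : En n) : ℝ≥0∞ :=
  ((volume (ball x t))⁻¹ * ∫⁻ y in ball x t, g y ^ r) ^ (1 / r)

theorem sliceNorm_eq_eLpNorm (hq : q ≠ 0) (g : En n → ℝ≥0∞) :
    sliceNorm n t r q g = eLpNorm (ballMean n t r g) q volume := by
  unfold sliceNorm
  split_ifs with hqtop
  · rw [hqtop, eLpNorm_exponent_top, eLpNormEssSup]
    rfl
  · rw [eLpNorm_eq_lintegral_rpow_enorm_toReal hq hqtop]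
    rfl

theorem ballMean_eq_mul_eLpNorm (hr : 0 < r) (g : En n → ℝ≥0∞) (x : En n) :
    ballMean n t r g x = (volume (ball x t))⁻¹ ^ (1 / r) *
      eLpNorm g (ENNReal.ofReal r) (volume.restrict (ball x t)) := by
  rw [ballMean, mul_rpow_of_nonneg _ _ (by positivity),
    eLpNorm_eq_lintegral_rpow_enorm_toReal (by simpa using hr) ofReal_ne_top, toReal_ofReal hr.le]
  rfl

theorem measurable_ballMean {g : En n → ℝ≥0∞} (hg : Measurable g) :
    Measurable (ballMean n t r g) := by
  have hcenter : ballMean n t r g =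
      fun x => ((volume (ball (0 : En n) t))⁻¹ * ∫⁻ y in ball x t, g y ^ r) ^ (1 / r) := by
    funext x
    rw [ballMean, Measure.addHaar_ball_center]
  rw [hcenter]
  exact (measurable_const.mul (measurable_setLIntegral_ball (hg.pow_const r) t)).pow_const _

theorem sliceNorm_mono (hr : 0 ≤ r) (q : ℝ≥0∞) {g h : En n → ℝ≥0∞} (hgh : g ≤ h) :
    sliceNorm n t r q g ≤ sliceNorm n t r q h := by
  have hmean : ballMean n t r g ≤ ballMean n t r h := fun x => by
    unfold ballMean
    gcongr with y
    exact hgh y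
  unfold sliceNorm
  split_ifs
  · exact essSup_mono_ae (ae_of_all _ hmean)
  · exact rpow_le_rpow (lintegral_mono fun x => rpow_le_rpow (hmean x) toReal_nonneg)
      (by positivity)

theorem sliceNorm_tsum_le (hr : 1 ≤ r) (hq : 1 ≤ q) {g : ℕ → En n → ℝ≥0∞}
    (hg : ∀ k, Measurable (g k)) :
    sliceNorm n t r q (fun y => ∑' k, g k y) ≤ ∑' k, sliceNorm n t r q (g k) := by
  have hq0 : q ≠ 0 := (zero_lt_one.trans_le hq).ne'
  have hmean : ∀ x, ballMean n t r (fun y => ∑' k, g k y) x ≤ ∑' k, ballMean n t r (g k) x := by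
    intro x
    simp only [ballMean_eq_mul_eLpNorm (zero_lt_one.trans_le hr), ENNReal.tsum_mul_left]
    gcongr
    exact eLpNorm_tsum_le (fun k => (hg k).aemeasurable) (one_le_ofReal.2 hr)
  simp only [sliceNorm_eq_eLpNorm hq0]
  exact (eLpNorm_mono_enorm hmean).trans
    (eLpNorm_tsum_le (fun k => (measurable_ballMean (hg k)).aemeasurable) hq)

end SliceNorm

section Pieces

variable {n : ℕ}

theorem shell_subset_pieceN (k : ℕ) : shell n k ⊆ pieceN n k := by
  rcases Nat.eq_zero_or_pos k with rfl | hk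
  · rw [pieceN, if_pos rfl]
    exact sdiff_subset
  · simp [pieceN, hk.ne']

theorem shell_subset_pieceN_zero {k : ℤ} (hk : k ≤ 0) : shell n k ⊆ pieceN n 0 :=
  sdiff_subset.trans <| closedBall_subset_closedBall <| by
    simpa using zpow_le_zpow_right₀ (one_le_two (α := ℝ)) hk

theorem measurableSet_pieceN (k : ℕ) : MeasurableSet (pieceN n k) := by
  unfold pieceN shell ballZ
  split_ifs
  exacts [measurableSet_closedBall, measurableSet_closedBall.diff measurableSet_closedBall]

theorem pieceN_succ (k : ℕ) : pieceN n (k + 1) = shell n ((k : ℤ) + 1) := by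
  simp [pieceN]

theorem exists_mem_pieceN (y : En n) : ∃ k, y ∈ pieceN n k := by
  classical
  have hex : ∃ k : ℕ, y ∈ ballZ n k := by
    obtain ⟨k, hk⟩ := pow_unbounded_of_one_lt ‖y‖ one_lt_two
    exact ⟨k, mem_closedBall_zero_iff.2 (by simpa using hk.le)⟩
  refine ⟨Nat.find hex, ?_⟩
  rcases h : Nat.find hex with _ | k
  · simpa [pieceN, h] using Nat.find_spec hex
  · have hmin := Nat.find_min hex (h ▸ k.lt_succ_self : k < Nat.find hex)
    rw [pieceN_succ, shell]
    exact ⟨by simpa [h] using Nat.find_spec hex, by simpa using hmin⟩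

end Pieces

section Herz

variable {n : ℕ} {t r α : ℝ} {q p : ℝ≥0∞} {g : En n → ℝ≥0∞}

theorem herzNonHom_rpow (hp0 : p ≠ 0) (hp : p ≠ ∞) :
    herzNonHom n t r q α p g ^ p.toReal =
      ∑' k : ℕ, ((2 : ℝ≥0∞) ^ ((k : ℝ) * α) *
        sliceNorm n t r q ((pieceN n k).indicator g)) ^ p.toReal := by
  rw [herzNonHom, if_neg hp, ← rpow_mul, one_div, inv_mul_cancel₀ (toReal_pos hp0 hp).ne',
    rpow_one]

theorem herzHom_rpow (hp0 : p ≠ 0) (hp : p ≠ ∞) :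
    herzHom n t r q α p g ^ p.toReal =
      ∑' k : ℤ, ((2 : ℝ≥0∞) ^ ((k : ℝ) * α) *
        sliceNorm n t r q ((shell n k).indicator g)) ^ p.toReal := by
  rw [herzHom, if_neg hp, ← rpow_mul, one_div, inv_mul_cancel₀ (toReal_pos hp0 hp).ne',
    rpow_one]

theorem le_herzNonHom (hp0 : p ≠ 0) (hp : p ≠ ∞) (k : ℕ) :
    (2 : ℝ≥0∞) ^ ((k : ℝ) * α) * sliceNorm n t r q ((pieceN n k).indicator g) ≤
      herzNonHom n t r q α p g := by
  rw [← rpow_le_rpow_iff (toReal_pos hp0 hp), herzNonHom_rpow hp0 hp]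
  exact ENNReal.le_tsum k

theorem sliceNorm_shell_le_pieceN (hr : 0 ≤ r) (k : ℕ) :
    sliceNorm n t r q ((shell n k).indicator g) ≤ sliceNorm n t r q ((pieceN n k).indicator g) :=
  sliceNorm_mono hr q (indicator_le_indicator_of_subset (shell_subset_pieceN k) fun _ => zero_le)

theorem sliceNorm_shell_le_herzNonHom (hr : 0 ≤ r) (hp0 : p ≠ 0) (hp : p ≠ ∞) {k : ℤ}
    (hk : k ≤ 0) : sliceNorm n t r q ((shell n k).indicator g) ≤ herzNonHom n t r q α p g := by
  refine (sliceNorm_mono hr q (indicator_le_indicator_of_subset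
    (shell_subset_pieceN_zero hk) fun _ => zero_le)).trans ?_
  simpa using le_herzNonHom (α := α) hp0 hp 0

theorem herzNonHom_le_mul_add (hr : 0 ≤ r) (hp0 : p ≠ 0) (hp : p ≠ ∞) :
    herzNonHom n t r q α p g ≤
      2 ^ (1 / p.toReal) * (herzHom n t r q α p g + sliceNorm n t r q g) := by
  set H := herzHom n t r q α p g
  set S := sliceNorm n t r q g
  have hP : 0 < p.toReal := toReal_pos hp0 hp
  refine ENNReal.le_rpow_inv_mul_of_rpow_le hP ?_
  have hball : sliceNorm n t r q ((pieceN n 0).indicator g) ≤ S :=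
    sliceNorm_mono hr q (indicator_le_self _ g)
  have hshells : ∑' k : ℕ, ((2 : ℝ≥0∞) ^ (((k + 1 : ℕ) : ℝ) * α) *
      sliceNorm n t r q ((pieceN n (k + 1)).indicator g)) ^ p.toReal ≤ H ^ p.toReal := by
    rw [herzHom_rpow hp0 hp]
    refine le_of_eq_of_le (tsum_congr fun k => ?_) (ENNReal.tsum_comp_le_tsum_of_injective
      (fun a b h => by simpa using h : Function.Injective fun k : ℕ => (k : ℤ) + 1) _)
    simp [pieceN_succ]
  calc herzNonHom n t r q α p g ^ p.toReal
      ≤ S ^ p.toReal + H ^ p.toReal := by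
        rw [herzNonHom_rpow hp0 hp, tsum_eq_zero_add' ENNReal.summable]
        gcongr
        simpa using hball
    _ ≤ (H + S) ^ p.toReal + (H + S) ^ p.toReal := by gcongr <;> simp
    _ = 2 * (H + S) ^ p.toReal := (two_mul _).symm

theorem herzHom_le_mul_herzNonHom (hr : 0 ≤ r) (hp0 : p ≠ 0) (hp : p ≠ ∞) :
    herzHom n t r q α p g ≤
      (1 + (1 - 2 ^ (-(α * p.toReal)))⁻¹) ^ (1 / p.toReal) * herzNonHom n t r q α p g := by
  set N := herzNonHom n t r q α p g
  set x : ℝ≥0∞ := 2 ^ (-(α * p.toReal))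
  have hP : 0 < p.toReal := toReal_pos hp0 hp
  refine ENNReal.le_rpow_inv_mul_of_rpow_le hP ?_
  have hNP : N ^ p.toReal = ∑' k : ℕ, ((2 : ℝ≥0∞) ^ ((k : ℝ) * α) *
      sliceNorm n t r q ((pieceN n k).indicator g)) ^ p.toReal := herzNonHom_rpow hp0 hp
  have hneg : ∀ m : ℕ, ((2 : ℝ≥0∞) ^ (((-((m : ℤ) + 1) : ℤ) : ℝ) * α) *
      sliceNorm n t r q ((shell n (-((m : ℤ) + 1))).indicator g)) ^ p.toReal ≤
        x ^ (m + 1) * N ^ p.toReal := by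
    intro m
    calc _ ≤ ((2 : ℝ≥0∞) ^ (((-((m : ℤ) + 1) : ℤ) : ℝ) * α) * N) ^ p.toReal := by
          gcongr
          exact sliceNorm_shell_le_herzNonHom hr hp0 hp (by omega)
      _ = x ^ (m + 1) * N ^ p.toReal := by
        rw [mul_rpow_of_nonneg _ _ hP.le, ← rpow_mul, ← rpow_natCast, ← rpow_mul]
        congr 2
        push_cast
        ring
  have hgeom : ∑' m : ℕ, x ^ (m + 1) ≤ (1 - x)⁻¹ := by
    rw [← ENNReal.tsum_geometric]
    exact ENNReal.tsum_comp_le_tsum_of_injective (add_left_injective 1) _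
  rw [herzHom_rpow hp0 hp, tsum_of_nat_of_neg_add_one ENNReal.summable ENNReal.summable,
    add_mul, one_mul]
  gcongr
  · rw [hNP]
    refine ENNReal.tsum_le_tsum fun k => ?_
    push_cast
    gcongr
    exact sliceNorm_shell_le_pieceN hr k
  · calc _ ≤ ∑' m : ℕ, x ^ (m + 1) * N ^ p.toReal := ENNReal.tsum_le_tsum hneg
      _ ≤ (1 - x)⁻¹ * N ^ p.toReal := by rw [ENNReal.tsum_mul_right]; gcongr

theorem sliceNorm_le_mul_herzNonHom (hr : 1 ≤ r) (hq : 1 ≤ q) (hp0 : p ≠ 0) (hp : p ≠ ∞)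
    (hg : Measurable g) :
    sliceNorm n t r q g ≤ (1 - 2 ^ (-α))⁻¹ * herzNonHom n t r q α p g := by
  have hcover : g ≤ fun y => ∑' k, (pieceN n k).indicator g y := fun y => by
    obtain ⟨k, hk⟩ := exists_mem_pieceN y
    simpa [indicator_of_mem hk] using ENNReal.le_tsum (f := fun k => (pieceN n k).indicator g y) k
  have hpiece : ∀ k : ℕ, sliceNorm n t r q ((pieceN n k).indicator g) ≤
      (2 ^ (-α)) ^ k * herzNonHom n t r q α p g := by
    intro k
    have h2 : ((2 : ℝ≥0∞) ^ (-α)) ^ k * 2 ^ ((k : ℝ) * α) = 1 := by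
      rw [← rpow_natCast, ← rpow_mul, ← rpow_add _ _ two_ne_zero ofNat_ne_top, neg_mul,
        mul_comm, neg_add_cancel, rpow_zero]
    calc _ = (2 ^ (-α)) ^ k *
          (2 ^ ((k : ℝ) * α) * sliceNorm n t r q ((pieceN n k).indicator g)) := by
          rw [← mul_assoc, h2, one_mul]
      _ ≤ _ := by gcongr; exact le_herzNonHom hp0 hp k
  calc sliceNorm n t r q g
      ≤ ∑' k, sliceNorm n t r q ((pieceN n k).indicator g) :=
        (sliceNorm_mono (zero_le_one.trans hr) q hcover).trans
          (sliceNorm_tsum_le hr hq fun k => hg.indicator (measurableSet_pieceN k))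
    _ ≤ ∑' k : ℕ, (2 ^ (-α)) ^ k * herzNonHom n t r q α p g := ENNReal.tsum_le_tsum hpiece
    _ = (1 - 2 ^ (-α))⁻¹ * herzNonHom n t r q α p g := by
        rw [ENNReal.tsum_mul_right, ENNReal.tsum_geometric]

end Herz

theorem nonHomHerzSlice_eq_homHerzSlice_inter_slice_general
    (n : ℕ) (α t r : ℝ) (hα : 0 < α) (hr : 1 < r)
    (p : ℝ≥0∞) (hp : 0 < p) (hp' : p ≠ ∞) (q : ℝ≥0∞) (hq : 1 ≤ q) :
    ∃ C : ℝ≥0, 1 ≤ C ∧ ∀ f : En n → ℂ, Measurable f →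
      (C : ℝ≥0∞)⁻¹ * (herzHomC n t r q α p f + sliceNormC n t r q f)
          ≤ herzNonHomC n t r q α p f ∧
      herzNonHomC n t r q α p f
          ≤ (C : ℝ≥0∞) * (herzHomC n t r q α p f + sliceNormC n t r q f) := by
  have hP : 0 < p.toReal := toReal_pos hp.ne' hp'
  have hgeom : ∀ β : ℝ, 0 < β → (1 - (2 : ℝ≥0∞) ^ (-β))⁻¹ ≠ ∞ := fun β hβ => inv_ne_top.2
    (tsub_pos_of_lt (rpow_lt_one_of_one_lt_of_neg one_lt_two (neg_neg_of_pos hβ))).ne'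
  set K₁ : ℝ≥0∞ := 2 ^ (1 / p.toReal)
  set K₂ : ℝ≥0∞ :=
    (1 + (1 - 2 ^ (-(α * p.toReal)))⁻¹) ^ (1 / p.toReal) + (1 - 2 ^ (-α))⁻¹
  have hK₁ : K₁ ≠ ∞ := rpow_ne_top_of_nonneg (by positivity) ofNat_ne_top
  have hK₂ : K₂ ≠ ∞ := add_ne_top.2 ⟨rpow_ne_top_of_nonneg (by positivity)
    (add_ne_top.2 ⟨one_ne_top, hgeom _ (by positivity)⟩), hgeom α hα⟩
  set C : ℝ≥0 := max 1 (max K₁.toNNReal K₂.toNNReal)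
  have hK₁C : K₁ ≤ C := by
    rw [← coe_toNNReal hK₁]
    exact coe_le_coe.2 (le_max_of_le_right (le_max_left _ _))
  have hK₂C : K₂ ≤ C := by
    rw [← coe_toNNReal hK₂]
    exact coe_le_coe.2 (le_max_of_le_right (le_max_right _ _))
  refine ⟨C, le_max_left _ _, fun f hf => ⟨?_, ?_⟩⟩
  · rw [ENNReal.inv_mul_le_iff (by simp [C]) coe_ne_top]
    calc herzHomC n t r q α p f + sliceNormC n t r q f ≤ K₂ * herzNonHomC n t r q α p f := by
          rw [add_mul]
          exact add_le_add (herzHom_le_mul_herzNonHom (by linarith) hp.ne' hp')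
            (sliceNorm_le_mul_herzNonHom hr.le hq hp.ne' hp' hf.nnnorm.coe_nnreal_ennreal)
      _ ≤ C * herzNonHomC n t r q α p f := mul_le_mul_left hK₂C _
  · exact (herzNonHom_le_mul_add (by linarith) hp.ne' hp').trans (mul_le_mul_left hK₁C _)

/-- the non-homogeneous Herz-slice space is the intersection of the homogeneous
Herz-slice space and the slice space, with equivalent norms. -/
theorem nonHomHerzSlice_eq_homHerzSlice_inter_slice
    (n : ℕ) (hn : 1 ≤ n) (α t r : ℝ) (hα : 0 < α) (ht : 0 < t) (hr : 1 < r)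
    (p : ℝ≥0∞) (hp : 0 < p) (hp' : p ≠ ∞) (q : ℝ≥0∞) (hq : 1 ≤ q) :
    ∃ C : ℝ≥0, 1 ≤ C ∧ ∀ f : En n → ℂ, Measurable f →
      (C : ℝ≥0∞)⁻¹ * (herzHomC n t r q α p f + sliceNormC n t r q f)
          ≤ herzNonHomC n t r q α p f ∧
      herzNonHomC n t r q α p f
          ≤ (C : ℝ≥0∞) * (herzHomC n t r q α p f + sliceNormC n t r q f) :=
  nonHomHerzSlice_eq_homHerzSlice_inter_slice_general n α t r hα hr p hp hp' q hq
end
end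

section
/- Let n ≥ 1, t ∈ (0,∞), r ∈ (1,∞) and q ∈ (1,∞). Then there is a constant C > 0, depending only on n, t, r, q, such that for every center x₀ ∈ ℝⁿ and every radius r₀ ∈ (1,∞), the characteristic function of the ball B(x₀, r₀) satisfies ‖1_{B(x₀,r₀)}‖_{(E_r^q)_t} ≤ C · r₀^{n/q}. (In particular, the slice norm of 1_{B(x₀,r₀)} does not depend on x₀: ‖1_{B(x₀,r₀)}‖_{(E_r^q)_t} = ‖1_{B(0,r₀)}‖_{(E_r^q)_t}.) -/
/-!
The local mean `(⨍_{B(x,t)} 1_A^r)^{1/r}` is at most `1`, and it vanishes unless `B(x,t)` meets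
`A`, i.e. unless `x` lies in the `t`-thickening `A_t` of `A`. Hence `‖1_A‖_{(E_r^q)_t} ≤ |A_t|^{1/q}`.
For `A = B(x₀,r₀)` with `r₀ ≥ 1` we have `A_t ⊆ B(x₀, t + r₀) ⊆ B(x₀, r₀ (t + 1))`, a ball of
measure `r₀ⁿ |B(0, t + 1)|`. Independence of the center is translation invariance of Lebesgue
measure, applied both to the inner averages and to the outer `L^q` norm.
-/

open MeasureTheory Metric Set ENNReal
open scoped NNReal

noncomputable section

lemma indicator_one_rpow {α : Type*} (A : Set α) {r : ℝ} (hr : 0 < r) (x : α) :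
    A.indicator (1 : α → ℝ≥0∞) x ^ r = A.indicator 1 x := by
  by_cases hx : x ∈ A <;> simp [hx, hr]

lemma lintegral_indicator_one_rpow {α : Type*} [MeasurableSpace α] (μ : Measure α) {A : Set α}
    (hA : MeasurableSet A) {r : ℝ} (hr : 0 < r) :
    ∫⁻ x, A.indicator (1 : α → ℝ≥0∞) x ^ r ∂μ = μ A := by
  simp only [indicator_one_rpow A hr]
  exact lintegral_indicator_one hA

lemma addHaar_ball_add_le {E : Type*} [NormedAddCommGroup E] [NormedSpace ℝ E] [MeasurableSpace E]
    [BorelSpace E] [FiniteDimensional ℝ E] (μ : Measure E) [μ.IsAddHaarMeasure] (x : E)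
    {t R : ℝ} (ht : 0 ≤ t) (hR : 1 ≤ R) :
    μ (ball x (t + R)) ≤ ENNReal.ofReal (R ^ Module.finrank ℝ E) * μ (ball 0 (t + 1)) := by
  rw [← Measure.addHaar_ball_mul_of_pos μ x (by linarith : 0 < R)]
  exact measure_mono (ball_subset_ball (by nlinarith))

def localMean (n : ℕ) (t r : ℝ) (g : En n → ℝ≥0∞) (x : En n) : ℝ≥0∞ :=
  ((volume (ball x t))⁻¹ * ∫⁻ y in ball x t, g y ^ r) ^ (1 / r)

section SliceNorm

variable {n : ℕ} {t r : ℝ} {q : ℝ≥0∞}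

lemma sliceNorm_top (g : En n → ℝ≥0∞) :
    sliceNorm n t r ∞ g = essSup (localMean n t r g) volume :=
  if_pos rfl

lemma sliceNorm_of_ne_top (hq : q ≠ ∞) (g : En n → ℝ≥0∞) :
    sliceNorm n t r q g = (∫⁻ x, localMean n t r g x ^ q.toReal) ^ (1 / q.toReal) :=
  if_neg hq

lemma localMean_comp_sub_const (g : En n → ℝ≥0∞) (a x : En n) :
    localMean n t r (fun y => g (y - a)) x = localMean n t r g (x - a) := by
  have hball : (fun y => y - a) ⁻¹' ball (x - a) t = ball x t := by
    ext y
    simp only [mem_preimage, mem_ball, dist_sub_right]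
  rw [localMean, localMean, Measure.addHaar_ball_center volume x,
    Measure.addHaar_ball_center volume (x - a), ← hball,
    (measurePreserving_sub_right volume a).setLIntegral_comp_preimage_emb
      (measurableEmbedding_subRight a) (g · ^ r)]

lemma sliceNorm_comp_sub_const (q : ℝ≥0∞) (g : En n → ℝ≥0∞) (a : En n) :
    sliceNorm n t r q (fun y => g (y - a)) = sliceNorm n t r q g := by
  have h : localMean n t r (fun y => g (y - a)) = localMean n t r g ∘ (· - a) :=
    funext (localMean_comp_sub_const g a)
  rcases eq_or_ne q ∞ with rfl | hq
  · rw [sliceNorm_top, sliceNorm_top, h, ← (measurableEmbedding_subRight a).essSup_map_measure,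
      (measurePreserving_sub_right volume a).map_eq]
  · rw [sliceNorm_of_ne_top hq, sliceNorm_of_ne_top hq, h]
    exact congr_arg (· ^ _) (lintegral_sub_right_eq_self (localMean n t r g · ^ q.toReal) a)

lemma localMean_indicator_one_le {A : Set (En n)} (hA : MeasurableSet A) (hr : 0 < r) (x : En n) :
    localMean n t r (A.indicator 1) x ≤ (thickening t A).indicator 1 x := by
  rw [localMean, lintegral_indicator_one_rpow _ hA hr, Measure.restrict_apply hA]
  by_cases hx : x ∈ thickening t A
  · rw [indicator_of_mem hx, Pi.one_apply]
    refine rpow_le_one ?_ (by positivity)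
    calc (volume (ball x t))⁻¹ * volume (A ∩ ball x t)
        ≤ (volume (ball x t))⁻¹ * volume (ball x t) := by gcongr; exact inter_subset_right
      _ ≤ 1 := ENNReal.inv_mul_le_one _
  · have hdisj : A ∩ ball x t = ∅ := by
      refine eq_empty_of_forall_notMem fun z ⟨hzA, hzx⟩ => hx ?_
      exact mem_thickening_iff.2 ⟨z, hzA, mem_ball'.1 hzx⟩
    rw [indicator_of_notMem hx, hdisj, measure_empty, mul_zero, zero_rpow_of_pos (by positivity)]

lemma sliceNorm_indicator_one_le {A : Set (En n)} (hA : MeasurableSet A) (hr : 0 < r)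
    (hq0 : q ≠ 0) (hq : q ≠ ∞) :
    sliceNorm n t r q (A.indicator 1) ≤ volume (thickening t A) ^ (1 / q.toReal) := by
  have hq_pos : 0 < q.toReal := toReal_pos hq0 hq
  rw [sliceNorm_of_ne_top hq, ← lintegral_indicator_one_rpow volume
    (isOpen_thickening (E := A) (δ := t)).measurableSet hq_pos]
  gcongr with x
  exact localMean_indicator_one_le hA hr x

lemma sliceNorm_indicator_ball_le (hr : 0 < r) (ht : 0 ≤ t) (hq0 : q ≠ 0) (hq : q ≠ ∞)
    (x₀ : En n) {R : ℝ} (hR : 1 ≤ R) :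
    sliceNorm n t r q ((ball x₀ R).indicator 1)
      ≤ volume (ball (0 : En n) (t + 1)) ^ (1 / q.toReal)
        * ENNReal.ofReal (R ^ ((n : ℝ) / q.toReal)) := by
  calc sliceNorm n t r q ((ball x₀ R).indicator 1)
      ≤ volume (thickening t (ball x₀ R)) ^ (1 / q.toReal) :=
        sliceNorm_indicator_one_le measurableSet_ball hr hq0 hq
    _ ≤ volume (ball x₀ (t + R)) ^ (1 / q.toReal) := by
        gcongr
        exact Metric.thickening_ball x₀ t R
    _ ≤ (ENNReal.ofReal (R ^ n) * volume (ball (0 : En n) (t + 1))) ^ (1 / q.toReal) := by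
        gcongr
        simpa only [finrank_euclideanSpace_fin] using addHaar_ball_add_le volume x₀ ht hR
    _ = _ := by
        rw [mul_rpow_of_nonneg _ _ (by positivity), mul_comm,
          ofReal_rpow_of_nonneg (by positivity) (by positivity), ← Real.rpow_natCast,
          ← Real.rpow_mul (by linarith), mul_one_div]

end SliceNorm

theorem slice_norm_indicator_ball_general
    (n : ℕ) (t r : ℝ) (ht : 0 < t) (hr : 1 < r)
    (q : ℝ≥0∞) (hq : 1 < q) (hq' : q ≠ ∞) :
    (∃ C : ℝ≥0, 0 < C ∧ ∀ (x₀ : En n) (r₀ : ℝ), 1 < r₀ →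
      sliceNorm n t r q ((ball x₀ r₀).indicator fun _ => (1 : ℝ≥0∞))
        ≤ (C : ℝ≥0∞) * ENNReal.ofReal (r₀ ^ ((n : ℝ) / q.toReal))) ∧
    (∀ (x₀ : En n) (r₀ : ℝ), 1 < r₀ →
      sliceNorm n t r q ((ball x₀ r₀).indicator fun _ => (1 : ℝ≥0∞))
        = sliceNorm n t r q ((ball (0 : En n) r₀).indicator fun _ => (1 : ℝ≥0∞))) := by
  have hq0 : q ≠ 0 := (zero_lt_one.trans hq).ne'
  set C := volume (ball (0 : En n) (t + 1)) ^ (1 / q.toReal)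
  have hC0 : C ≠ 0 :=
    (rpow_pos (measure_ball_pos volume 0 (by linarith)) measure_ball_lt_top.ne).ne'
  have hCtop : C ≠ ∞ := rpow_ne_top_of_nonneg (by positivity) measure_ball_lt_top.ne
  refine ⟨⟨C.toNNReal, toNNReal_pos hC0 hCtop, fun x₀ r₀ hr₀ => ?_⟩, fun x₀ r₀ _ => ?_⟩
  · rw [coe_toNNReal hCtop]
    exact sliceNorm_indicator_ball_le (by linarith) ht.le hq0 hq' x₀ hr₀.le
  · have htranslate : (ball x₀ r₀).indicator (fun _ => (1 : ℝ≥0∞))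
        = fun y => (ball 0 r₀).indicator (fun _ => 1) (y - x₀) := by
      ext y
      simp only [indicator, mem_ball, dist_eq_norm, sub_zero]
    rw [htranslate, sliceNorm_comp_sub_const]

/-- slice norm of the characteristic function of a ball `B(x₀, r₀)` with
`r₀ > 1`: it is independent of the center and bounded by a constant times `r₀^{n/q}`. -/
theorem slice_norm_indicator_ball
    (n : ℕ) (hn : 1 ≤ n) (t r : ℝ) (ht : 0 < t) (hr : 1 < r)
    (q : ℝ≥0∞) (hq : 1 < q) (hq' : q ≠ ∞) :
    (∃ C : ℝ≥0, 0 < C ∧ ∀ (x₀ : En n) (r₀ : ℝ), 1 < r₀ →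
      sliceNorm n t r q ((ball x₀ r₀).indicator fun _ => (1 : ℝ≥0∞))
        ≤ (C : ℝ≥0∞) * ENNReal.ofReal (r₀ ^ ((n : ℝ) / q.toReal))) ∧
    (∀ (x₀ : En n) (r₀ : ℝ), 1 < r₀ →
      sliceNorm n t r q ((ball x₀ r₀).indicator fun _ => (1 : ℝ≥0∞))
        = sliceNorm n t r q ((ball (0 : En n) r₀).indicator fun _ => (1 : ℝ≥0∞))) :=
  slice_norm_indicator_ball_general n t r ht hr q hq hq'
end
end
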